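/- arXiv:1211.2664 — 4 statements merged into one kernel-verified Lean document; each statement's English description precedes it below -/
import Mathlib

section
/- If D is a probability distribution on [N] with total variation distance at least ε from the uniform distribution U, then the set L' = {ℓ ∈ [N] : D(ℓ) < 1/N − ε/(4N)} has cardinality at least (ε/4)·N. -/
open Finset

/-!
Since the deviations `D i - 1/N` sum to zero, the total variation distance equals the total
deficit `∑ i, (D i - 1/N)⁻`, which is therefore at least `ε`. A point of `L'` contributes at
most `1/N` to the deficit (as `D ≥ 0`) and any other point at most `ε/(4N)`, so
`ε ≤ |L'|/N + ε/4`.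
-/

theorem sum_abs_eq_two_nsmul_sum_negPart {ι α : Type*} [AddCommGroup α] [LinearOrder α]
    [IsOrderedAddMonoid α] {s : Finset ι} {f : ι → α} (hf : ∑ i ∈ s, f i = 0) :
    ∑ i ∈ s, |f i| = 2 • ∑ i ∈ s, (f i)⁻ := by
  have hpos : ∑ i ∈ s, (f i)⁺ = ∑ i ∈ s, (f i)⁻ := by
    rw [← sub_eq_zero, ← sum_sub_distrib, ← hf]
    simp only [posPart_sub_negPart]
  simp only [← posPart_add_negPart, sum_add_distrib, hpos, two_nsmul]

theorem sum_negPart_sub_le_card_filter_nsmul_add {ι α : Type*} [Fintype ι] [AddCommGroup α]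
    [LinearOrder α] [IsOrderedAddMonoid α] (D : ι → α) (hD : ∀ i, 0 ≤ D i) {c δ : α}
    (hc : 0 ≤ c) (hδ : 0 ≤ δ) :
    ∑ i, (D i - c)⁻ ≤ #{i | D i < c - δ} • c + Fintype.card ι • δ := by
  rw [← sum_filter_add_sum_filter_not univ (fun i => D i < c - δ)]
  gcongr
  · refine sum_le_card_nsmul _ _ _ fun i _ => ?_
    rw [negPart_def, neg_sub]
    exact max_le (sub_le_self c (hD i)) hc
  · calc ∑ i ∈ {i | ¬D i < c - δ}, (D i - c)⁻ ≤ #{i | ¬D i < c - δ} • δ := by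
          refine sum_le_card_nsmul _ _ _ fun i hi => ?_
          rw [mem_filter, not_lt] at hi
          rw [negPart_def, neg_sub]
          exact max_le (sub_le_comm.mp hi.2) hδ
      _ ≤ Fintype.card ι • δ := nsmul_le_nsmul_left hδ (card_le_univ _)

/-- If `D` is a distribution on `[N]` with total variation distance at least `ε`
from the uniform distribution, then the set
`L' = {ℓ : D ℓ < 1/N − ε/(4N)}` has cardinality at least `(ε/4)·N`. -/
theorem many_light_points_of_far_from_uniform (N : ℕ) (D : Fin N → ℝ) (ε : ℝ)
    (hnn : ∀ i, 0 ≤ D i) (hsum : ∑ i, D i = 1)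
    (hε : 0 < ε ∧ ε ≤ 1)
    (hfar : ε ≤ (1/2) * ∑ i, |D i - 1/(N : ℝ)|) :
    (ε/4) * N ≤ ((Finset.univ.filter (fun ℓ => D ℓ < 1/(N : ℝ) - ε/(4*N))).card : ℝ) := by
  rcases N.eq_zero_or_pos with rfl | hN
  · simp
  have hN' : (0 : ℝ) < N := by exact_mod_cast hN
  have hcentered : ∑ i, (D i - 1/(N : ℝ)) = 0 := by
    simp [sum_sub_distrib, hsum, hN'.ne']
  have hdeficit : ε ≤ ∑ i, (D i - 1/(N : ℝ))⁻ := by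
    rw [sum_abs_eq_two_nsmul_sum_negPart hcentered, nsmul_eq_mul] at hfar
    linarith
  have hbound := sum_negPart_sub_le_card_filter_nsmul_add D hnn (c := 1/(N : ℝ))
    (δ := ε/(4*N)) (by positivity) (div_nonneg hε.1.le (by positivity))
  have hslack : (N : ℝ) * (ε/(4*N)) = ε/4 := by field_simp
  rw [nsmul_eq_mul, nsmul_eq_mul, Fintype.card_fin, mul_one_div, hslack] at hbound
  have hlight : 3 * ε / 4 * N ≤ #{ℓ | D ℓ < 1/(N : ℝ) - ε/(4*N)} := by
    rw [← le_div_iff₀ hN']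
    linarith
  linarith [mul_pos hε.1 hN']
end

section
/- Let D be a distribution on [N] with D(1) ≤ D(2) ≤ … ≤ D(N), let ε₁ ∈ (0,1), and suppose k* ∈ [N] satisfies ε₁ < D({1,…,k*}) ≤ 2ε₁ < D({1,…,k*+1}). Then for every j > k* with D(j) ≥ ε₁, the set S = {1,…,j−1} satisfies ε₁·D(S) ≤ D(j) ≤ D(S)/ε₁ (i.e., S is an ε₁-comparable witness for j). -/
/-!
Both `D(j)` and `D({1,…,j−1})` lie in `[ε₁, 1]`: the prefix contains `{1,…,k*}`, whose mass
already exceeds `ε₁`. Any two numbers in `[ε, 1]` are within a factor `ε` of each other.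
-/

open Finset

theorem mul_le_and_le_div_of_mem_Icc {ε a b : ℝ} (hε : 0 < ε)
    (ha : a ∈ Set.Icc ε 1) (hb : b ∈ Set.Icc ε 1) : ε * b ≤ a ∧ a ≤ b / ε := by
  obtain ⟨hεa, ha1⟩ := ha
  obtain ⟨hεb, hb1⟩ := hb
  constructor
  · calc ε * b ≤ ε * 1 := mul_le_mul_of_nonneg_left hb1 hε.le
      _ = ε := mul_one ε
      _ ≤ a := hεa
  · rw [le_div_iff₀ hε]
    calc a * ε ≤ 1 * ε := mul_le_mul_of_nonneg_right ha1 hε.le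
      _ = ε := one_mul ε
      _ ≤ b := hεb

theorem sum_Icc_le_sum_Icc_of_le {M : Type*} [AddCommMonoid M] [PartialOrder M]
    [IsOrderedAddMonoid M] {f : ℕ → M} (hf : ∀ i, 0 ≤ f i) {a m n : ℕ} (hmn : m ≤ n) :
    ∑ i ∈ Icc a m, f i ≤ ∑ i ∈ Icc a n, f i :=
  sum_le_sum_of_subset_of_nonneg (Icc_subset_Icc_right hmn) fun i _ _ => hf i

theorem prefix_is_comparable_witness_of_heavy_general (N k j : ℕ) (D : ℕ → ℝ) (ε₁ : ℝ)
    (hnn : ∀ i, 0 ≤ D i) (hsum : ∑ i ∈ Finset.Icc 1 N, D i = 1)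
    (hε : 0 < ε₁ ∧ ε₁ < 1)
    (h1 : ε₁ < ∑ i ∈ Finset.Icc 1 k, D i)
    (hj : k < j) (hjN : j ≤ N) (hDj : ε₁ ≤ D j) :
    ε₁ * (∑ i ∈ Finset.Icc 1 (j-1), D i) ≤ D j ∧
      D j ≤ (∑ i ∈ Finset.Icc 1 (j-1), D i) / ε₁ := by
  have hDj_le_one : D j ≤ 1 :=
    hsum ▸ single_le_sum (fun i _ => hnn i) (mem_Icc.mpr ⟨by omega, hjN⟩)
  have hprefix_gt : ε₁ < ∑ i ∈ Icc 1 (j-1), D i :=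
    h1.trans_le (sum_Icc_le_sum_Icc_of_le hnn (by omega))
  have hprefix_le_one : ∑ i ∈ Icc 1 (j-1), D i ≤ 1 :=
    hsum ▸ sum_Icc_le_sum_Icc_of_le hnn (by omega)
  exact mul_le_and_le_div_of_mem_Icc hε.1 ⟨hDj, hDj_le_one⟩ ⟨hprefix_gt.le, hprefix_le_one⟩

/-- For a monotone distribution `D` on `{1,…,N}` with
`ε₁ < D({1,…,k*}) ≤ 2ε₁ < D({1,…,k*+1})`, every `j > k*` with `D(j) ≥ ε₁`
has `{1,…,j−1}` as an `ε₁`-comparable witness: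
`ε₁·D({1,…,j−1}) ≤ D(j) ≤ D({1,…,j−1})/ε₁`. -/
theorem prefix_is_comparable_witness_of_heavy (N k j : ℕ) (D : ℕ → ℝ) (ε₁ : ℝ)
    (hnn : ∀ i, 0 ≤ D i) (hsum : ∑ i ∈ Finset.Icc 1 N, D i = 1)
    (hmono : ∀ i j, 1 ≤ i → i ≤ j → j ≤ N → D i ≤ D j)
    (hε : 0 < ε₁ ∧ ε₁ < 1)
    (hk1 : 1 ≤ k) (hkN : k + 1 ≤ N)
    (h1 : ε₁ < ∑ i ∈ Finset.Icc 1 k, D i)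
    (h2 : ∑ i ∈ Finset.Icc 1 k, D i ≤ 2*ε₁)
    (h3 : 2*ε₁ < ∑ i ∈ Finset.Icc 1 (k+1), D i)
    (hj : k < j) (hjN : j ≤ N) (hDj : ε₁ ≤ D j) :
    ε₁ * (∑ i ∈ Finset.Icc 1 (j-1), D i) ≤ D j ∧
      D j ≤ (∑ i ∈ Finset.Icc 1 (j-1), D i) / ε₁ :=
  prefix_is_comparable_witness_of_heavy_general N k j D ε₁ hnn hsum hε h1 hj hjN hDj
end

section
/- Let D be a distribution on [N] with D(1) ≤ … ≤ D(N) and suppose k* ∈ [N] satisfies ε₁ < D({1,…,k*}) ≤ 2ε₁ < D({1,…,k*+1}) for some ε₁ ∈ (0,1). Then for every j > k* with D(j) < ε₁, the set {1,…,j−1} can be partitioned into disjoint sets S₁,…,S_t such that (1/2)·D(j) ≤ D(S_i) ≤ 2·D(j) for every i ∈ [t]. -/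
/-!
Greedy packing: as long as the remaining mass exceeds `2 D(j)`, split off a set of mass in
`[D(j)/2, 3 D(j)/2)`, which exists because every element weighs at most `D(j)`; what is left then
still has mass above `D(j)/2`. Monotonicity makes `D(j)` positive and the prefix heavy
enough to start: `D({1,…,j−1}) ≥ D({1,…,k*}) > ε₁ > D(j)`.
-/

open Finset

variable {α : Type*} [DecidableEq α] {w : α → ℝ} {d : ℝ}

lemma Finset.exists_subset_sum_mem_Ico (hd : 0 < d) (s : Finset α) (hw : ∀ x ∈ s, w x ≤ d)
    (hs : d / 2 ≤ ∑ x ∈ s, w x) : ∃ t ⊆ s, ∑ x ∈ t, w x ∈ Set.Ico (d / 2) (3 * d / 2) := by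
  induction s using Finset.induction_on with
  | empty => rw [sum_empty] at hs; linarith
  | insert x s hx ih =>
    by_cases hsmall : ∑ y ∈ s, w y < d / 2
    · refine ⟨insert x s, Subset.rfl, hs, ?_⟩
      rw [sum_insert hx]
      linarith [hw x (mem_insert_self x s)]
    · obtain ⟨t, hts, ht⟩ := ih (fun y hy => hw y (mem_insert_of_mem hy)) (not_lt.1 hsmall)
      exact ⟨t, hts.trans (subset_insert x s), ht⟩

lemma exists_finpartition_sum_mem_Icc (hd : 0 < d) (s : Finset α) (hw : ∀ x ∈ s, w x ≤ d)
    (hs : d / 2 ≤ ∑ x ∈ s, w x) :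
    ∃ P : Finpartition s, ∀ p ∈ P.parts, ∑ x ∈ p, w x ∈ Set.Icc (d / 2) (2 * d) := by
  induction s using Finset.strongInduction with
  | H s ih =>
    have hs_ne : s ≠ ∅ := by rintro rfl; rw [sum_empty] at hs; linarith
    by_cases hsmall : ∑ x ∈ s, w x ≤ 2 * d
    · refine ⟨Finpartition.indiscrete hs_ne, fun p hp => ?_⟩
      rw [Finpartition.indiscrete_parts, mem_singleton] at hp
      exact hp ▸ ⟨hs, hsmall⟩
    obtain ⟨t, hts, ht⟩ := s.exists_subset_sum_mem_Ico hd hw hs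
    have ht_ne : t ≠ ∅ := by rintro rfl; rw [sum_empty] at ht; linarith [ht.1]
    have hrest : ∑ x ∈ s \ t, w x = ∑ x ∈ s, w x - ∑ x ∈ t, w x := sum_sdiff_eq_sub hts
    obtain ⟨P, hP⟩ := ih (s \ t) (sdiff_ssubset hts (nonempty_iff_ne_empty.2 ht_ne))
      (fun x hx => hw x (mem_sdiff.1 hx).1) (by linarith [ht.2])
    refine ⟨P.extend ht_ne disjoint_sdiff_self_left (sdiff_union_of_subset hts), fun p hp => ?_⟩
    rw [Finpartition.extend_parts, mem_insert] at hp
    rcases hp with rfl | hp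
    · exact ⟨ht.1, by linarith [ht.2]⟩
    · exact hP p hp

lemma Finpartition.exists_fin_enumeration {s : Finset α} (P : Finpartition s) :
    ∃ (t : ℕ) (S : Fin t → Finset α), (∀ i₁ i₂, i₁ ≠ i₂ → Disjoint (S i₁) (S i₂)) ∧
      univ.biUnion S = s ∧ ∀ i, S i ∈ P.parts := by
  set e := P.parts.equivFin.symm
  refine ⟨#P.parts, fun i => e i, fun i₁ i₂ hne => ?_, ?_, fun i => (e i).2⟩
  · exact P.disjoint (e i₁).2 (e i₂).2 (fun h => hne (e.injective (Subtype.ext h)))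
  · refine Eq.trans ?_ P.biUnion_parts
    ext x
    simp only [mem_biUnion, mem_univ, true_and, id]
    exact ⟨fun ⟨i, hi⟩ => ⟨e i, (e i).2, hi⟩, fun ⟨p, hp, hx⟩ => ⟨e.symm ⟨p, hp⟩, by simpa⟩⟩

theorem prefix_partition_into_comparable_witnesses_general (N k j : ℕ) (D : ℕ → ℝ) (ε₁ : ℝ)
    (hnn : ∀ i, 0 ≤ D i)
    (hmono : ∀ i j, 1 ≤ i → i ≤ j → j ≤ N → D i ≤ D j)
    (h1 : ε₁ < ∑ i ∈ Finset.Icc 1 k, D i)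
    (hj : k < j) (hjN : j ≤ N) (hDj : D j < ε₁) :
    ∃ (t : ℕ) (S : Fin t → Finset ℕ),
      (∀ i₁ i₂, i₁ ≠ i₂ → Disjoint (S i₁) (S i₂)) ∧
      (Finset.univ.biUnion S = Finset.Icc 1 (j-1)) ∧
      (∀ i, (1/2) * D j ≤ ∑ x ∈ S i, D x ∧ ∑ x ∈ S i, D x ≤ 2 * D j) := by
  have hk : Icc 1 k ⊆ Icc 1 (j - 1) := Icc_subset_Icc_right (by omega)
  have hle : ∀ i ∈ Icc 1 (j - 1), D i ≤ D j := fun i hi =>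
    hmono i j (mem_Icc.1 hi).1 (by have := (mem_Icc.1 hi).2; omega) hjN
  have hpos : 0 < D j := by
    by_contra! h
    have : ∑ i ∈ Icc 1 k, D i ≤ 0 := sum_nonpos fun i hi => (hle i (hk hi)).trans h
    linarith [hnn j]
  have hmass : ∑ i ∈ Icc 1 k, D i ≤ ∑ i ∈ Icc 1 (j - 1), D i :=
    sum_le_sum_of_subset_of_nonneg hk fun i _ _ => hnn i
  obtain ⟨P, hP⟩ := exists_finpartition_sum_mem_Icc hpos _ hle (by linarith [hnn j])
  obtain ⟨t, S, hdisj, hunion, hparts⟩ := P.exists_fin_enumeration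
  exact ⟨t, S, hdisj, hunion, fun i => ⟨by linarith [(hP _ (hparts i)).1], (hP _ (hparts i)).2⟩⟩

/-- For a monotone distribution `D` on `{1,…,N}` with
`ε₁ < D({1,…,k*}) ≤ 2ε₁ < D({1,…,k*+1})`, every `j > k*` with `D(j) < ε₁`
admits a partition of `{1,…,j−1}` into disjoint sets `S₁,…,S_t`, each of which
is a `1/2`-comparable witness for `j`:
`(1/2)·D(j) ≤ D(Sᵢ) ≤ 2·D(j)` for all `i`. -/
theorem prefix_partition_into_comparable_witnesses (N k j : ℕ) (D : ℕ → ℝ) (ε₁ : ℝ)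
    (hnn : ∀ i, 0 ≤ D i) (hsum : ∑ i ∈ Finset.Icc 1 N, D i = 1)
    (hmono : ∀ i j, 1 ≤ i → i ≤ j → j ≤ N → D i ≤ D j)
    (hε : 0 < ε₁ ∧ ε₁ < 1)
    (hk1 : 1 ≤ k) (hkN : k + 1 ≤ N)
    (h1 : ε₁ < ∑ i ∈ Finset.Icc 1 k, D i)
    (h2 : ∑ i ∈ Finset.Icc 1 k, D i ≤ 2*ε₁)
    (h3 : 2*ε₁ < ∑ i ∈ Finset.Icc 1 (k+1), D i)
    (hj : k < j) (hjN : j ≤ N) (hDj : D j < ε₁) :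
    ∃ (t : ℕ) (S : Fin t → Finset ℕ),
      (∀ i₁ i₂, i₁ ≠ i₂ → Disjoint (S i₁) (S i₂)) ∧
      (Finset.univ.biUnion S = Finset.Icc 1 (j-1)) ∧
      (∀ i, (1/2) * D j ≤ ∑ x ∈ S i, D x ∧ ∑ x ∈ S i, D x ≤ 2 * D j) :=
  prefix_partition_into_comparable_witnesses_general N k j D ε₁ hnn hmono h1 hj hjN hDj
end

section
/- Suppose D₁, D₂ are distributions on [N] with d_TV(D₁,D₂) ≥ ε, let ε̃ ≤ ε/100, and let R = {r₁,…,r_t} be an (ε̃,ε̃)-cover for D₁. Then there exists j ∈ [t] such that for every α ∈ [ε̃, 2ε̃], letting U = U^{D₁}_α(r_j) = {y : D₁(r_j)/(1+α) ≤ D₁(y) ≤ (1+α)·D₁(r_j)}, at least one of the following holds: (1) D₁(U) ≥ ε̃/t and D₂(U) ∉ [1−ε̃, 1+ε̃]·D₁(U), or D₁(U) < ε̃/t and D₂(U) > 2ε̃/t; (2) D₁(U) ≥ ε̃/t and at least an ε̃-fraction of the points in U satisfy D₂(i)/D₂(r_j) ∉ [1/(1+α+ε̃), 1+α+ε̃];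 (3) D₁(U) ≥ ε̃/t and the D₂-weight of points i ∈ U with D₂(i)/D₂(r_j) ∉ [1/(1+α+ε̃), 1+α+ε̃] is at least ε̃²/t. -/
/-!
Argue by contradiction: suppose each `r_j` has a scale `α_j ∈ [ε̃, 2ε̃]` at which (1)–(3) all
fail, and let `U` be its window. If `D₁(U) < ε̃/t`, then `U` carries less than `ε̃/t` of the
positive part of `D₁ - D₂`. Otherwise the failure of (1) and (3) leaves `D₂`-mass at least
`(1 - 2ε̃) D₁(U)` on the non-outliers of `U`, each of which has `D₂`-mass at most
`(1 + α + ε̃) D₂(r_j)`; averaging against `|U| D₁(r_j) ≤ (1 + α) D₁(U)` gives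
`D₂(r_j) ≥ (1 - O(ε̃)) D₁(r_j)`, hence `D₂(i) ≥ (1 - 20ε̃) D₁(i)` at every non-outlier `i`. By the
failure of (2) the outliers form at most an `ε̃`-fraction of `U`, so they carry at most
`2ε̃ D₁(U)`. Thus every window carries at most `ε̃/t + 22ε̃ D₁(U)` of the positive part.

The windows contain the `ε̃`-windows, so they cover all but `ε̃` of the `D₁`-mass. After passing
to a subfamily of the intervals `[D₁(r_j)/(1+α_j), (1+α_j) D₁(r_j)]` in which no point lies in
three of them, the positive part of `D₁ - D₂` has total mass at most `ε̃ + ε̃ + 44ε̃ < ε`, whereas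
this mass is `d_TV(D₁, D₂) ≥ ε`.
-/

open Finset

theorem Set.Icc_subset_union_Icc_of_mem {α : Type*} [LinearOrder α] {x a₁ b₁ a₂ b₂ a₃ b₃ : α}
    (h₂ : x ∈ Set.Icc a₂ b₂) (h₃ : x ∈ Set.Icc a₃ b₃) (ha : a₂ ≤ a₁) (hb : b₁ ≤ b₃) :
    Set.Icc a₁ b₁ ⊆ Set.Icc a₂ b₂ ∪ Set.Icc a₃ b₃ := by
  rw [Set.Icc_union_Icc' (h₃.1.trans h₂.2) (h₂.1.trans h₃.2)]
  exact Set.Icc_subset_Icc (min_le_of_left_le ha) (le_max_of_le_right hb)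

theorem exists_subcover_Icc_card_le_two {α ι : Type*} [LinearOrder α] [Fintype ι] (a b : ι → α) :
    ∃ S : Finset ι, (∀ x i, x ∈ Set.Icc (a i) (b i) → ∃ j ∈ S, x ∈ Set.Icc (a j) (b j)) ∧
      ∀ x, #{j ∈ S | x ∈ Set.Icc (a j) (b j)} ≤ 2 := by
  classical
  obtain ⟨S, hS, hmin⟩ := exists_min_image
    {S : Finset ι | ∀ x i, x ∈ Set.Icc (a i) (b i) → ∃ j ∈ S, x ∈ Set.Icc (a j) (b j)} card
    ⟨univ, mem_filter.2 ⟨mem_univ _, fun x i hx => ⟨i, mem_univ i, hx⟩⟩⟩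
  simp only [mem_filter, mem_univ, true_and] at hS hmin
  refine ⟨S, hS, fun x => ?_⟩
  by_contra! h
  set T := {j ∈ S | x ∈ Set.Icc (a j) (b j)}
  have hT : T.Nonempty := card_pos.1 (by omega)
  -- the leftmost and the rightmost interval through `x` together cover any third one
  obtain ⟨p, hp, hpmin⟩ := exists_min_image T a hT
  obtain ⟨q, hq, hqmax⟩ := exists_max_image T b hT
  obtain ⟨r, hr⟩ : ((T.erase p).erase q).Nonempty := by
    rw [← card_pos]
    have := pred_card_le_card_erase (s := T) (a := p)
    have := pred_card_le_card_erase (s := T.erase p) (a := q)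
    omega
  obtain ⟨hrq, hrp, hrT⟩ : r ≠ q ∧ r ≠ p ∧ r ∈ T := by simpa only [mem_erase] using hr
  have hsub : Set.Icc (a r) (b r) ⊆ Set.Icc (a p) (b p) ∪ Set.Icc (a q) (b q) :=
    Set.Icc_subset_union_Icc_of_mem (mem_filter.1 hp).2 (mem_filter.1 hq).2 (hpmin r hrT)
      (hqmax r hrT)
  have hcov : ∀ y i, y ∈ Set.Icc (a i) (b i) → ∃ j ∈ S.erase r, y ∈ Set.Icc (a j) (b j) := by
    intro y i hy
    obtain ⟨j, hj, hyj⟩ := hS y i hy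
    by_cases hjr : j = r
    · subst hjr
      rcases hsub hyj with h | h
      exacts [⟨p, mem_erase.2 ⟨hrp.symm, (mem_filter.1 hp).1⟩, h⟩,
        ⟨q, mem_erase.2 ⟨hrq.symm, (mem_filter.1 hq).1⟩, h⟩]
    · exact ⟨j, mem_erase.2 ⟨hjr, hj⟩, hyj⟩
  exact (card_erase_lt_of_mem (mem_filter.1 hrT).1).not_ge (hmin _ hcov)

section DoubleCounting

variable {ι κ : Type*} [Fintype κ] [DecidableEq κ] (S : Finset ι) (W : ι → Finset κ)

theorem sum_sum_eq_sum_card_mul (g : κ → ℝ) :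
    ∑ j ∈ S, ∑ y ∈ W j, g y = ∑ y, (#{j ∈ S | y ∈ W j} : ℝ) * g y := by
  rw [sum_comm' (t' := univ) (s' := fun y => {j ∈ S | y ∈ W j}) (by simp)]
  simp only [sum_const, nsmul_eq_mul]

variable {g : κ → ℝ}

theorem sum_le_sum_sum_of_forall_exists_mem (hg : ∀ y, 0 ≤ g y) {s : Finset κ}
    (hs : ∀ y ∈ s, ∃ j ∈ S, y ∈ W j) : ∑ y ∈ s, g y ≤ ∑ j ∈ S, ∑ y ∈ W j, g y := by
  rw [sum_sum_eq_sum_card_mul]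
  refine (sum_le_sum fun y hy => ?_).trans <| sum_le_sum_of_subset_of_nonneg (subset_univ s)
    fun y _ _ => mul_nonneg (Nat.cast_nonneg _) (hg y)
  obtain ⟨j, hj, hyj⟩ := hs y hy
  exact le_mul_of_one_le_left (hg y) (by exact_mod_cast card_pos.2 ⟨j, mem_filter.2 ⟨hj, hyj⟩⟩)

theorem sum_sum_le_mul_sum_of_card_le (hg : ∀ y, 0 ≤ g y) {m : ℕ}
    (hm : ∀ y, #{j ∈ S | y ∈ W j} ≤ m) : ∑ j ∈ S, ∑ y ∈ W j, g y ≤ m * ∑ y, g y := by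
  rw [sum_sum_eq_sum_card_mul, mul_sum]
  exact sum_le_sum fun y _ => mul_le_mul_of_nonneg_right (by exact_mod_cast hm y) (hg y)

end DoubleCounting

theorem posPart_sub_le_left {a b : ℝ} (ha : 0 ≤ a) (hb : 0 ≤ b) : (a - b)⁺ ≤ a := by
  rw [posPart_def]
  exact sup_le (sub_le_self a hb) ha

theorem sum_abs_sub_eq_two_mul_sum_posPart {ι : Type*} (s : Finset ι) (f g : ι → ℝ)
    (h : ∑ i ∈ s, f i = ∑ i ∈ s, g i) :
    ∑ i ∈ s, |f i - g i| = 2 * ∑ i ∈ s, (f i - g i)⁺ := by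
  calc ∑ i ∈ s, |f i - g i| = ∑ i ∈ s, (|f i - g i| + (f i - g i)) := by
        rw [sum_add_distrib, sum_sub_distrib, h, sub_self, add_zero]
    _ = 2 * ∑ i ∈ s, (f i - g i)⁺ := by
        simp only [abs_add_eq_two_nsmul_posPart, nsmul_eq_mul, mul_sum, Nat.cast_ofNat]

noncomputable section Windows

variable {κ : Type*}

def ratioOutliers (D : κ → ℝ) (c : ℝ) (x : κ) (U : Finset κ) : Finset κ :=
  {i ∈ U | ¬ (1 / c ≤ D i / D x ∧ D i / D x ≤ c)}

theorem pos_of_sum_ratioOutliers_lt {f g : κ → ℝ} {x : κ} {e c : ℝ} {U : Finset κ}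
    (hg : ∀ i, 0 ≤ g i) (hc : 0 < c) (he : e ≤ 1 / 2) (hfU : 0 ≤ ∑ i ∈ U, f i)
    (hbal : (1 - e) * ∑ i ∈ U, f i ≤ ∑ i ∈ U, g i)
    (hout : ∑ i ∈ ratioOutliers g c x U, g i < e * ∑ i ∈ U, f i) : 0 < g x := by
  by_contra! hx
  have hall : ratioOutliers g c x U = U := filter_true_of_mem fun i _ hi =>
    (div_nonpos_of_nonneg_of_nonpos (hg i) hx).not_gt ((one_div_pos.2 hc).trans_le hi.1)
  rw [hall] at hout
  nlinarith [mul_nonneg (by linarith : (0 : ℝ) ≤ 1 - 2 * e) hfU]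

variable [Fintype κ]

/-- The paper's `U^D_γ(x)`. -/
def ratioWindow (D : κ → ℝ) (γ : ℝ) (x : κ) : Finset κ :=
  {y | D x / (1 + γ) ≤ D y ∧ D y ≤ (1 + γ) * D x}

/-- One of the conditions (1)–(3) holds for the representative `x` at scale `α`. -/
def IsDiscrepancyWitness (D₁ D₂ : κ → ℝ) (εt : ℝ) (t : ℕ) (α : ℝ) (x : κ) : Prop :=
  let U := ratioWindow D₁ α x
  let bad := ratioOutliers D₂ (1 + α + εt) x U
  ((εt / t ≤ ∑ y ∈ U, D₁ y ∧
      ¬ ((1 - εt) * ∑ y ∈ U, D₁ y ≤ ∑ y ∈ U, D₂ y ∧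
        ∑ y ∈ U, D₂ y ≤ (1 + εt) * ∑ y ∈ U, D₁ y)) ∨
    (∑ y ∈ U, D₁ y < εt / t ∧ 2 * εt / t < ∑ y ∈ U, D₂ y)) ∨
  (εt / t ≤ ∑ y ∈ U, D₁ y ∧ εt * #U ≤ (#bad : ℝ)) ∨
  (εt / t ≤ ∑ y ∈ U, D₁ y ∧ εt ^ 2 / t ≤ ∑ i ∈ bad, D₂ i)

variable {D : κ → ℝ} {γ : ℝ} {x y : κ}

@[simp]
theorem mem_ratioWindow :
    y ∈ ratioWindow D γ x ↔ D x / (1 + γ) ≤ D y ∧ D y ≤ (1 + γ) * D x := by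
  simp [ratioWindow]

theorem ratioWindow_mono {γ' : ℝ} (hx : 0 ≤ D x) (hγ : 0 < 1 + γ) (h : γ ≤ γ') :
    ratioWindow D γ x ⊆ ratioWindow D γ' x := by
  intro y hy
  rw [mem_ratioWindow] at hy ⊢
  exact ⟨(div_le_div_of_nonneg_left hx hγ (by linarith)).trans hy.1,
    hy.2.trans (mul_le_mul_of_nonneg_right (by linarith) hx)⟩

theorem card_mul_le_sum_ratioWindow (hγ : 0 < 1 + γ) :
    #(ratioWindow D γ x) * D x ≤ (1 + γ) * ∑ y ∈ ratioWindow D γ x, D y := by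
  have h := card_nsmul_le_sum _ D (D x / (1 + γ)) fun y hy => (mem_ratioWindow.1 hy).1
  rw [nsmul_eq_mul, ← mul_div_assoc, div_le_iff₀ hγ] at h
  linarith

theorem sum_le_of_subset_ratioWindow {B : Finset κ} {e : ℝ} (he : 0 ≤ e) (hx : 0 ≤ D x)
    (hγ : 0 < 1 + γ) (hB : B ⊆ ratioWindow D γ x) (hcard : (#B : ℝ) ≤ e * #(ratioWindow D γ x)) :
    ∑ i ∈ B, D i ≤ e * (1 + γ) ^ 2 * ∑ i ∈ ratioWindow D γ x, D i := by
  have hsum := sum_le_card_nsmul B D ((1 + γ) * D x) fun i hi => (mem_ratioWindow.1 (hB hi)).2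
  rw [nsmul_eq_mul] at hsum
  calc ∑ i ∈ B, D i ≤ #B * ((1 + γ) * D x) := hsum
    _ ≤ e * #(ratioWindow D γ x) * ((1 + γ) * D x) :=
        mul_le_mul_of_nonneg_right hcard (mul_nonneg hγ.le hx)
    _ = e * (1 + γ) * (#(ratioWindow D γ x) * D x) := by ring
    _ ≤ e * (1 + γ) * ((1 + γ) * ∑ i ∈ ratioWindow D γ x, D i) :=
        mul_le_mul_of_nonneg_left (card_mul_le_sum_ratioWindow hγ) (mul_nonneg he hγ.le)
    _ = e * (1 + γ) ^ 2 * ∑ i ∈ ratioWindow D γ x, D i := by ring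

end Windows

section LocalBound

variable {κ : Type*} [Fintype κ] {f g : κ → ℝ} {x : κ} {e α : ℝ}

theorem le_mul_of_sum_ratioOutliers_lt (hf : ∀ i, 0 ≤ f i) (hg : ∀ i, 0 ≤ g i) (hα : 0 ≤ α)
    (he : 0 ≤ e) (hgx : 0 < g x)
    (hbal : (1 - e) * ∑ i ∈ ratioWindow f α x, f i ≤ ∑ i ∈ ratioWindow f α x, g i)
    (hout : ∑ i ∈ ratioOutliers g (1 + α + e) x (ratioWindow f α x), g i <
      e * ∑ i ∈ ratioWindow f α x, f i) :
    (1 - 2 * e) * f x ≤ (1 + α) * (1 + α + e) * g x := by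
  classical
  set U := ratioWindow f α x
  set B := ratioOutliers g (1 + α + e) x U
  have hfU : 0 < ∑ i ∈ U, f i :=
    pos_of_mul_pos_right ((sum_nonneg fun i _ => hg i).trans_lt hout) he
  have hgood : ∑ i ∈ U \ B, g i ≤ #U * ((1 + α + e) * g x) := by
    have hle : ∀ i ∈ U \ B, g i ≤ (1 + α + e) * g x := fun i hi => by
      obtain ⟨hiU, hiB⟩ := mem_sdiff.1 hi
      have hratio : g i / g x ≤ 1 + α + e := by
        by_contra h
        exact hiB (mem_filter.2 ⟨hiU, fun h' => h h'.2⟩)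
      rwa [div_le_iff₀ hgx] at hratio
    calc ∑ i ∈ U \ B, g i ≤ #(U \ B) * ((1 + α + e) * g x) := by
          simpa only [nsmul_eq_mul] using sum_le_card_nsmul _ _ _ hle
      _ ≤ #U * ((1 + α + e) * g x) := by
          gcongr
          exact sdiff_subset
  have hsplit : ∑ i ∈ U \ B, g i + ∑ i ∈ B, g i = ∑ i ∈ U, g i := sum_sdiff (filter_subset _ _)
  have hmass : (1 - 2 * e) * ∑ i ∈ U, f i ≤ #U * ((1 + α + e) * g x) := by linarith
  refine le_of_mul_le_mul_left ?_ hfU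
  calc (∑ i ∈ U, f i) * ((1 - 2 * e) * f x) = ((1 - 2 * e) * ∑ i ∈ U, f i) * f x := by ring
    _ ≤ (#U * ((1 + α + e) * g x)) * f x := mul_le_mul_of_nonneg_right hmass (hf x)
    _ = (#U * f x) * ((1 + α + e) * g x) := by ring
    _ ≤ ((1 + α) * ∑ i ∈ U, f i) * ((1 + α + e) * g x) :=
        mul_le_mul_of_nonneg_right (card_mul_le_sum_ratioWindow (by linarith)) (by positivity)
    _ = (∑ i ∈ U, f i) * ((1 + α) * (1 + α + e) * g x) := by ring

theorem sub_le_of_mem_ratioWindow_of_le_div (he : 0 ≤ e) (he' : e ≤ 1 / 100) (hα : 0 ≤ α)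
    (hα' : α ≤ 2 * e) (hgx : 0 < g x) (havg : (1 - 2 * e) * f x ≤ (1 + α) * (1 + α + e) * g x)
    {i : κ} (hfi : 0 ≤ f i) (hi : i ∈ ratioWindow f α x) (hgi : 1 / (1 + α + e) ≤ g i / g x) :
    f i - g i ≤ 20 * e * f i := by
  set K := ((1 + α) * (1 + α + e)) ^ 2
  have hq : 1 ≤ (1 + α) * (1 + α + e) := by nlinarith
  have hK₁ : 1 ≤ K := one_le_pow₀ hq
  have hK : K ≤ 1 + 18 * e := by
    have hq' : (1 + α) * (1 + α + e) ≤ 1 + 6 * e := by nlinarith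
    nlinarith
  have hgx' : g x ≤ (1 + α + e) * g i := by
    rwa [div_le_div_iff₀ (by linarith) hgx, one_mul, mul_comm] at hgi
  have hlow : (1 - 2 * e) * f i ≤ K * g i :=
    calc (1 - 2 * e) * f i ≤ (1 - 2 * e) * ((1 + α) * f x) :=
          mul_le_mul_of_nonneg_left (mem_ratioWindow.1 hi).2 (by linarith)
      _ = (1 + α) * ((1 - 2 * e) * f x) := by ring
      _ ≤ (1 + α) * ((1 + α) * (1 + α + e) * g x) :=
          mul_le_mul_of_nonneg_left havg (by linarith)
      _ ≤ (1 + α) * ((1 + α) * (1 + α + e) * ((1 + α + e) * g i)) := by gcongr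
      _ = K * g i := by ring
  refine le_of_mul_le_mul_left ?_ (by linarith : 0 < K)
  nlinarith [mul_le_mul_of_nonneg_right hK hfi,
    mul_le_mul_of_nonneg_right hK₁ (by positivity : 0 ≤ 20 * e * f i)]

theorem sum_posPart_sub_ratioWindow_le (he : 0 < e) (he' : e ≤ 1 / 100) (hα : 0 ≤ α)
    (hα' : α ≤ 2 * e) (hf : ∀ i, 0 ≤ f i) (hg : ∀ i, 0 ≤ g i)
    (hbal : (1 - e) * ∑ i ∈ ratioWindow f α x, f i ≤ ∑ i ∈ ratioWindow f α x, g i)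
    (hcard : (#(ratioOutliers g (1 + α + e) x (ratioWindow f α x)) : ℝ) <
      e * #(ratioWindow f α x))
    (hout : ∑ i ∈ ratioOutliers g (1 + α + e) x (ratioWindow f α x), g i <
      e * ∑ i ∈ ratioWindow f α x, f i) :
    ∑ i ∈ ratioWindow f α x, (f i - g i)⁺ ≤ 22 * e * ∑ i ∈ ratioWindow f α x, f i := by
  classical
  set U := ratioWindow f α x
  set B := ratioOutliers g (1 + α + e) x U
  have hfU : 0 ≤ ∑ i ∈ U, f i := sum_nonneg fun i _ => hf i
  have hgx := pos_of_sum_ratioOutliers_lt hg (by linarith) (by linarith) hfU hbal hout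
  have havg := le_mul_of_sum_ratioOutliers_lt hf hg hα he.le hgx hbal hout
  have hgood : ∀ i ∈ U \ B, (f i - g i)⁺ ≤ 20 * e * f i := fun i hi => by
    obtain ⟨hiU, hiB⟩ := mem_sdiff.1 hi
    have hgi : 1 / (1 + α + e) ≤ g i / g x := by
      by_contra h
      exact hiB (mem_filter.2 ⟨hiU, fun h' => h h'.1⟩)
    rw [posPart_def]
    exact sup_le (sub_le_of_mem_ratioWindow_of_le_div he.le he' hα hα' hgx havg (hf i) hiU hgi)
      (by have := hf i; positivity)
  have hbad : ∑ i ∈ B, f i ≤ 2 * e * ∑ i ∈ U, f i := by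
    refine (sum_le_of_subset_ratioWindow he.le (hf x) (by linarith) (filter_subset _ _)
      hcard.le).trans ?_
    have hα₂ : (1 + α) ^ 2 ≤ 2 := by nlinarith
    exact mul_le_mul_of_nonneg_right (by nlinarith) hfU
  calc ∑ i ∈ U, (f i - g i)⁺ = ∑ i ∈ U \ B, (f i - g i)⁺ + ∑ i ∈ B, (f i - g i)⁺ :=
        (sum_sdiff (filter_subset _ _)).symm
    _ ≤ ∑ i ∈ U \ B, 20 * e * f i + ∑ i ∈ B, f i :=
        add_le_add (sum_le_sum hgood) (sum_le_sum fun i _ => posPart_sub_le_left (hf i) (hg i))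
    _ ≤ 20 * e * ∑ i ∈ U, f i + 2 * e * ∑ i ∈ U, f i := by
        rw [← mul_sum]
        gcongr
        · exact fun i _ _ => hf i
        · exact sdiff_subset
    _ = 22 * e * ∑ i ∈ U, f i := by ring

theorem sum_posPart_sub_ratioWindow_le_of_not_isDiscrepancyWitness {t : ℕ} (he : 0 < e)
    (he' : e ≤ 1 / 100) (hα : 0 ≤ α) (hα' : α ≤ 2 * e) (hf : ∀ i, 0 ≤ f i) (hg : ∀ i, 0 ≤ g i)
    (h : ¬ IsDiscrepancyWitness f g e t α x) :
    ∑ i ∈ ratioWindow f α x, (f i - g i)⁺ ≤ e / t + 22 * e * ∑ i ∈ ratioWindow f α x, f i := by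
  simp only [IsDiscrepancyWitness] at h
  push Not at h
  obtain ⟨⟨hbal, -⟩, hcard, hout⟩ := h
  have hfU : 0 ≤ ∑ i ∈ ratioWindow f α x, f i := sum_nonneg fun i _ => hf i
  rcases lt_or_ge (∑ i ∈ ratioWindow f α x, f i) (e / t) with hsmall | hlarge
  · have := sum_le_sum fun i (_ : i ∈ ratioWindow f α x) => posPart_sub_le_left (hf i) (hg i)
    nlinarith
  · have hout' : ∑ i ∈ ratioOutliers g (1 + α + e) x (ratioWindow f α x), g i <
        e * ∑ i ∈ ratioWindow f α x, f i :=
      calc _ < e ^ 2 / t := hout hlarge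
        _ = e * (e / t) := by ring
        _ ≤ _ := mul_le_mul_of_nonneg_left hlarge he.le
    have := sum_posPart_sub_ratioWindow_le he he' hα hα' hf hg (hbal hlarge).1 (hcard hlarge) hout'
    have : 0 ≤ e / t := by positivity
    linarith

end LocalBound

theorem sum_posPart_sub_le_of_ratioWindow_bound {ι κ : Type*} [Fintype ι] [Fintype κ]
    [DecidableEq κ] {D₁ D₂ : κ → ℝ} (hD₁ : ∀ i, 0 ≤ D₁ i) (hD₂ : ∀ i, 0 ≤ D₂ i) (R : ι → κ)
    (α : ι → ℝ) {γ δ c η : ℝ}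
    -- explicit, so that `hunc` accepts the caller's instance (e.g. `Nat.decidableExistsFin`)
    [DecidablePred fun y => ∃ j, D₁ (R j) / (1 + γ) ≤ D₁ y ∧ D₁ y ≤ (1 + γ) * D₁ (R j)]
    (hγ : 0 < 1 + γ) (hα : ∀ j, γ ≤ α j) (hδ : 0 ≤ δ) (hc : 0 ≤ c)
    (hunc : ∑ y ∈ univ.filter (fun y => ¬ ∃ j,
        D₁ (R j) / (1 + γ) ≤ D₁ y ∧ D₁ y ≤ (1 + γ) * D₁ (R j)), D₁ y ≤ η)
    (hloc : ∀ j, ∑ y ∈ ratioWindow D₁ (α j) (R j), (D₁ y - D₂ y)⁺ ≤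
      δ + c * ∑ y ∈ ratioWindow D₁ (α j) (R j), D₁ y) :
    ∑ y, (D₁ y - D₂ y)⁺ ≤ η + Fintype.card ι * δ + 2 * c * ∑ y, D₁ y := by
  set W := fun j => ratioWindow D₁ (α j) (R j)
  obtain ⟨S, hScov, hSmult⟩ := exists_subcover_Icc_card_le_two
    (fun j => D₁ (R j) / (1 + α j)) (fun j => (1 + α j) * D₁ (R j))
  have hcov : ∀ y ∈ univ.filter (fun y => ∃ j,
      D₁ (R j) / (1 + γ) ≤ D₁ y ∧ D₁ y ≤ (1 + γ) * D₁ (R j)), ∃ j ∈ S, y ∈ W j := by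
    intro y hy
    obtain ⟨i, hi⟩ := (mem_filter.1 hy).2
    obtain ⟨j, hj, hyj⟩ := hScov (D₁ y) i
      (mem_ratioWindow.1 (ratioWindow_mono (hD₁ _) hγ (hα i) (mem_ratioWindow.2 hi)))
    exact ⟨j, hj, mem_ratioWindow.2 hyj⟩
  have hmult : ∀ y, #{j ∈ S | y ∈ W j} ≤ 2 := fun y =>
    (card_le_card fun j hj => by
      simp only [W, mem_filter, mem_ratioWindow] at hj
      exact mem_filter.2 hj).trans (hSmult (D₁ y))
  calc ∑ y, (D₁ y - D₂ y)⁺ = ∑ y ∈ univ.filter (fun y => ∃ j,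
          D₁ (R j) / (1 + γ) ≤ D₁ y ∧ D₁ y ≤ (1 + γ) * D₁ (R j)), (D₁ y - D₂ y)⁺ +
        ∑ y ∈ univ.filter (fun y => ¬ ∃ j,
          D₁ (R j) / (1 + γ) ≤ D₁ y ∧ D₁ y ≤ (1 + γ) * D₁ (R j)), (D₁ y - D₂ y)⁺ :=
        (sum_filter_add_sum_filter_not _ _ _).symm
    _ ≤ ∑ j ∈ S, ∑ y ∈ W j, (D₁ y - D₂ y)⁺ + η :=
        add_le_add (sum_le_sum_sum_of_forall_exists_mem S W (fun _ => posPart_nonneg _) hcov)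
          ((sum_le_sum fun y _ => posPart_sub_le_left (hD₁ y) (hD₂ y)).trans hunc)
    _ ≤ ∑ j ∈ S, (δ + c * ∑ y ∈ W j, D₁ y) + η := by
        gcongr with j
        exact hloc j
    _ = #S * δ + c * ∑ j ∈ S, ∑ y ∈ W j, D₁ y + η := by
        rw [sum_add_distrib, sum_const, nsmul_eq_mul, mul_sum]
    _ ≤ Fintype.card ι * δ + c * (2 * ∑ y, D₁ y) + η := by
        gcongr
        · exact card_le_univ S
        · exact_mod_cast sum_sum_le_mul_sum_of_card_le S W hD₁ hmult
    _ = _ := by ring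

/-- If `d_TV(D₁,D₂) ≥ ε` and `R = (r₁,…,r_t)` is an `(ε̃,ε̃)`-cover for `D₁`
with `ε̃ ≤ ε/100`, then some `r_j` witnesses the discrepancy: for every
`α ∈ [ε̃,2ε̃]`, with `U = U^{D₁}_α(r_j)`, at least one of three conditions
(a weight discrepancy of `U`, many ratio-violating points in `U`, or large
`D₂`-weight of ratio-violating points) holds. -/
theorem cover_point_witnesses_discrepancy (N t : ℕ) (D₁ D₂ : Fin N → ℝ)
    (ε εt : ℝ) (R : Fin t → Fin N)
    (hnn₁ : ∀ i, 0 ≤ D₁ i) (hsum₁ : ∑ i, D₁ i = 1)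
    (hnn₂ : ∀ i, 0 ≤ D₂ i) (hsum₂ : ∑ i, D₂ i = 1)
    (hεt : 0 < εt) (hεt' : εt ≤ ε/100)
    (hcover : ∑ y ∈ Finset.univ.filter
        (fun y => ¬ ∃ j : Fin t,
          D₁ (R j)/(1+εt) ≤ D₁ y ∧ D₁ y ≤ (1+εt) * D₁ (R j)), D₁ y ≤ εt)
    (hfar : ε ≤ (1/2) * ∑ i, |D₁ i - D₂ i|) :
    ∃ j : Fin t, ∀ α : ℝ, εt ≤ α → α ≤ 2*εt →
      let U : Finset (Fin N) := Finset.univ.filter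
        (fun y => D₁ (R j)/(1+α) ≤ D₁ y ∧ D₁ y ≤ (1+α) * D₁ (R j))
      let bad : Finset (Fin N) := U.filter
        (fun i => ¬ (1/(1+α+εt) ≤ D₂ i / D₂ (R j) ∧ D₂ i / D₂ (R j) ≤ 1+α+εt))
      -- (1) weight discrepancy
      ((εt/t ≤ ∑ y ∈ U, D₁ y ∧
          ¬ ((1-εt) * ∑ y ∈ U, D₁ y ≤ ∑ y ∈ U, D₂ y ∧
             ∑ y ∈ U, D₂ y ≤ (1+εt) * ∑ y ∈ U, D₁ y)) ∨
       (∑ y ∈ U, D₁ y < εt/t ∧ 2*εt/t < ∑ y ∈ U, D₂ y)) ∨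
      -- (2) many ratio-violating points
      (εt/t ≤ ∑ y ∈ U, D₁ y ∧ εt * U.card ≤ (bad.card : ℝ)) ∨
      -- (3) ratio-violating points have large D₂-weight
      (εt/t ≤ ∑ y ∈ U, D₁ y ∧ εt^2/t ≤ ∑ i ∈ bad, D₂ i) := by
  change ∃ j, ∀ α, εt ≤ α → α ≤ 2 * εt → IsDiscrepancyWitness D₁ D₂ εt t α (R j)
  by_contra! hcon
  choose α hα hα' hcon using hcon
  have hpos : ε ≤ ∑ i, (D₁ i - D₂ i)⁺ := by
    rw [sum_abs_sub_eq_two_mul_sum_posPart _ _ _ (hsum₁.trans hsum₂.symm)] at hfar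
    linarith
  have hεt₁ : εt ≤ 1 / 100 := by
    have := sum_le_sum fun i (_ : i ∈ univ) => posPart_sub_le_left (hnn₁ i) (hnn₂ i)
    linarith
  have hcount := sum_posPart_sub_le_of_ratioWindow_bound hnn₁ hnn₂ R α (by linarith) hα
    (by positivity) (by positivity) hcover fun j =>
      sum_posPart_sub_ratioWindow_le_of_not_isDiscrepancyWitness hεt hεt₁ (hεt.le.trans (hα j))
        (hα' j) hnn₁ hnn₂ (hcon j)
  have ht : (Fintype.card (Fin t) : ℝ) * (εt / t) ≤ εt := by
    rw [Fintype.card_fin]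
    rcases eq_or_ne (t : ℝ) 0 with h | h
    · simp [h, hεt.le]
    · rw [mul_div_cancel₀ _ h]
  rw [hsum₁] at hcount
  linarith
end
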